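/- Let K = ℚ(ζ) be the cyclotomic field generated by a primitive third root of unity ζ. If n is a nonzero integer with n ≡ 3 (mod 4), and p is a prime number > 3 such that ord_p(n) is odd, then n is not a square in the completion K_𝔭 of K at 𝔭, for every prime ideal 𝔭 of the ring of integers O_K lying over p and for every prime ideal 𝔭 of O_K lying over 2. -/

import Mathlib

open IsDedekindDomain
open Polynomial Multiplicative

set_option maxHeartbeats 1000000
set_option synthInstance.maxHeartbeats 400000

local notation "ℤₘ₀" => WithZero (Multiplicative ℤ)

/-- `K = ℚ(ζ₃)`, the third cyclotomic field. -/
noncomputable abbrev K3 : Type := CyclotomicField 3 ℚ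

instance : NumberField K3 :=
  haveI : IsCyclotomicExtension {3} ℚ K3 := CyclotomicField.isCyclotomicExtension 3 ℚ
  IsCyclotomicExtension.numberField {3} ℚ K3

/-- `O_K`, the ring of integers of `ℚ(ζ₃)`. -/
noncomputable abbrev OK3 := NumberField.RingOfIntegers K3

instance : Fact (Nat.Prime ((3 : ℕ+) : ℕ)) := ⟨by norm_num⟩

instance : IsCyclotomicExtension {3} ℚ K3 := CyclotomicField.isCyclotomicExtension 3 ℚ

noncomputable def zK : K3 := IsCyclotomicExtension.zeta 3 ℚ K3
lemma hzK : IsPrimitiveRoot zK (3 : ℕ) := IsCyclotomicExtension.zeta_spec 3 ℚ K3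

noncomputable def z3 : OK3 := hzK.toInteger

lemma z3_sq : z3 ^ 2 + z3 + 1 = 0 := by
  have hprim : IsPrimitiveRoot z3 ((3 : ℕ+) : ℕ) := hzK.toInteger_isPrimitiveRoot
  have hpow : z3 ^ 3 = 1 := by
    have := hprim.pow_eq_one; simpa using this
  have hne : z3 - 1 ≠ 0 := by
    intro h
    exact hprim.ne_one (by norm_num) (sub_eq_zero.mp h)
  have h3 : (z3 - 1) * (z3 ^ 2 + z3 + 1) = 0 := by
    have : (z3 - 1) * (z3 ^ 2 + z3 + 1) = z3 ^ 3 - 1 := by ring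
    rw [this, hpow, sub_self]
  rcases mul_eq_zero.mp h3 with h | h
  · exact absurd h hne
  · exact h

noncomputable def B3 : PowerBasis ℤ OK3 := hzK.integralPowerBasis

lemma B3_dim : B3.dim = 2 := by
  rw [B3, hzK.integralPowerBasis_dim]
  rfl

lemma B3_gen : B3.gen = z3 := hzK.integralPowerBasis_gen

noncomputable def bZ : Module.Basis (Fin 2) ℤ OK3 := B3.basis.reindex (finCongr B3_dim)

lemma bZ_apply (i : Fin 2) : bZ i = z3 ^ (i : ℕ) := by
  rw [bZ, Module.Basis.reindex_apply, B3.coe_basis, B3_gen]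
  congr 1

lemma bZ0 : bZ 0 = 1 := by rw [bZ_apply]; exact pow_zero z3
lemma bZ1 : bZ 1 = z3 := by rw [bZ_apply]; exact pow_one z3

lemma coords_surj (x : OK3) : ∃ a b : ℤ, x = a + b * z3 := by
  refine ⟨bZ.repr x 0, bZ.repr x 1, ?_⟩
  have := bZ.sum_repr x
  rw [Fin.sum_univ_two] at this
  conv_lhs => rw [← this]
  rw [bZ0, bZ1, zsmul_eq_mul, zsmul_eq_mul, mul_one]

lemma coords_zero {a b : ℤ} (h : (a : OK3) + b * z3 = 0) : a = 0 ∧ b = 0 := by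
  have hx : a • bZ 0 + b • bZ 1 = 0 := by
    rw [bZ0, bZ1, zsmul_eq_mul, zsmul_eq_mul, mul_one]
    exact h
  have h0 := congrArg (fun y => bZ.repr y 0) hx
  have h1 := congrArg (fun y => bZ.repr y 1) hx
  simp only [map_add, map_smul, map_zero, Finsupp.add_apply, Finsupp.smul_apply,
    Module.Basis.repr_self, Finsupp.coe_zero, Pi.zero_apply, Finsupp.single_eq_same,
    Finsupp.single_eq_of_ne (by decide : (0:Fin 2) ≠ 1), Finsupp.single_eq_of_ne
    (by decide : (1:Fin 2) ≠ 0), smul_eq_mul, mul_one, mul_zero, add_zero, zero_add] at h0 h1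
  exact ⟨h0, h1⟩

lemma coords_unique {a b c d : ℤ} (h : (a : OK3) + b * z3 = (c : OK3) + d * z3) :
    a = c ∧ b = d := by
  have : ((a - c : ℤ) : OK3) + ((b - d : ℤ) : OK3) * z3 = 0 := by
    push_cast
    linear_combination h
  obtain ⟨h1, h2⟩ := coords_zero this
  constructor <;> omega

lemma mul_formula (a b c d : ℤ) :
    ((a : OK3) + b * z3) * ((c : OK3) + d * z3)
      = ((a * c - b * d : ℤ) : OK3) + ((a * d + b * c - b * d : ℤ) : OK3) * z3 := by
  push_cast
  linear_combination (b * d : OK3) * z3_sq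

lemma sq_formula (a b : ℤ) :
    ((a : OK3) + b * z3) ^ 2
      = ((a ^ 2 - b ^ 2 : ℤ) : OK3) + ((2 * a * b - b ^ 2 : ℤ) : OK3) * z3 := by
  have := mul_formula a b a b
  rw [← sq] at this
  rw [this]
  congr 2 <;> push_cast <;> ring

lemma int_dvd_coords (k a b : ℤ) :
    (k : OK3) ∣ ((a : OK3) + b * z3) ↔ k ∣ a ∧ k ∣ b := by
  constructor
  · rintro ⟨w, hw⟩
    obtain ⟨c, d, rfl⟩ := coords_surj w
    have hw2 : (a : OK3) + b * z3 = ((k * c : ℤ) : OK3) + ((k * d : ℤ) : OK3) * z3 := by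
      rw [hw]; push_cast; ring
    obtain ⟨h1, h2⟩ := coords_unique hw2
    exact ⟨⟨c, h1⟩, ⟨d, h2⟩⟩
  · rintro ⟨⟨c, rfl⟩, ⟨d, rfl⟩⟩
    exact ⟨(c : OK3) + d * z3, by push_cast; ring⟩

lemma zmod2_lemma : ∀ a b c d : ZMod 2, a * c - b * d = 0 → a * d + b * c - b * d = 0 →
    (a = 0 ∧ b = 0) ∨ (c = 0 ∧ d = 0) := by decide

lemma prime_two : Prime (2 : OK3) := by
  have hnu : ¬ IsUnit (2 : OK3) := by
    intro h
    have h' : (2 : OK3) ∣ 1 := isUnit_iff_dvd_one.mp h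
    have h1 : ((2 : ℤ) : OK3) ∣ ((1 : ℤ) : OK3) + ((0 : ℤ) : OK3) * z3 := by
      push_cast
      simpa using h'
    have : (2 : ℤ) ∣ 1 := ((int_dvd_coords 2 1 0).mp h1).1
    norm_num at this
  constructor
  · intro h20
    have h2 : ((2 : ℤ) : OK3) = ((0 : ℤ) : OK3) := by exact_mod_cast h20
    have := Int.cast_injective (α := OK3) h2
    norm_num at this
  constructor
  · exact hnu
  · intro x y hxy
    obtain ⟨a, b, rfl⟩ := coords_surj x
    obtain ⟨c, d, rfl⟩ := coords_surj y
    rw [mul_formula] at hxy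
    rw [show ((2 : OK3)) = ((2 : ℤ) : OK3) by push_cast; ring] at hxy ⊢
    obtain ⟨h1, h2⟩ := (int_dvd_coords 2 _ _).mp hxy
    have c1 : ((a * c - b * d : ℤ) : ZMod 2) = 0 := by
      rw [ZMod.intCast_zmod_eq_zero_iff_dvd]; exact_mod_cast h1
    have c2 : ((a * d + b * c - b * d : ℤ) : ZMod 2) = 0 := by
      rw [ZMod.intCast_zmod_eq_zero_iff_dvd]; exact_mod_cast h2
    push_cast at c1 c2
    rcases zmod2_lemma a b c d c1 c2 with ⟨ha, hb⟩ | ⟨hc, hd⟩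
    · left
      rw [int_dvd_coords]
      have da := (ZMod.intCast_zmod_eq_zero_iff_dvd a 2).mp ha
      have db := (ZMod.intCast_zmod_eq_zero_iff_dvd b 2).mp hb
      exact ⟨by exact_mod_cast da, by exact_mod_cast db⟩
    · right
      rw [int_dvd_coords]
      have dc := (ZMod.intCast_zmod_eq_zero_iff_dvd c 2).mp hc
      have dd := (ZMod.intCast_zmod_eq_zero_iff_dvd d 2).mp hd
      exact ⟨by exact_mod_cast dc, by exact_mod_cast dd⟩

/-- If an integer `m` lies in `v.asIdeal` which contains the prime `q`, then `q ∣ m`. -/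
lemma int_dvd_of_mem (v : HeightOneSpectrum OK3) {q : ℕ} (hq : q.Prime)
    (hqv : (q : OK3) ∈ v.asIdeal) {m : ℤ} (hm : (m : OK3) ∈ v.asIdeal) : (q : ℤ) ∣ m := by
  by_contra hdvd
  have hg : Int.gcd (q : ℤ) m = 1 := by
    rcases hq.eq_one_or_self_of_dvd (Int.gcd (q : ℤ) m) (by
      have h := Int.gcd_dvd_left (a := (q : ℤ)) (b := m)
      exact_mod_cast h) with h | h
    · exact h
    · exact absurd (h ▸ Int.gcd_dvd_right _ _) hdvd
  obtain ⟨u, w, huw⟩ := Int.isCoprime_iff_gcd_eq_one.mpr hg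
  have : (1 : OK3) ∈ v.asIdeal := by
    have := congrArg (fun t : ℤ => (t : OK3)) huw
    push_cast at this
    rw [← this]
    exact Ideal.add_mem _ (Ideal.mul_mem_left _ _ hqv) (Ideal.mul_mem_left _ _ hm)
  exact v.isPrime.ne_top (Ideal.eq_top_of_isUnit_mem _ this isUnit_one)

/-- If the quotient by `v.asIdeal` has prime cardinality `p`, every element of `OK3` is
congruent to an integer mod `v.asIdeal`. -/
lemma exists_int_congr (v : HeightOneSpectrum OK3) {p : ℕ} (hp : p.Prime)
    (hcard : Nat.card (OK3 ⧸ v.asIdeal) = p) (x : OK3) :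
    ∃ r : ℤ, x - (r : OK3) ∈ v.asIdeal := by
  set Q := OK3 ⧸ v.asIdeal
  have hfin : Finite Q := Nat.finite_of_card_ne_zero (by rw [hcard]; exact hp.ne_zero)
  have hnt : Nontrivial Q := Ideal.Quotient.nontrivial_iff.mpr (v.isPrime.ne_top)
  have h1 : (1 : Q) ≠ 0 := one_ne_zero
  have hord : addOrderOf (1 : Q) = p := by
    have hdvd : addOrderOf (1 : Q) ∣ p := hcard ▸ addOrderOf_dvd_natCard (1 : Q)
    rcases hp.eq_one_or_self_of_dvd _ hdvd with h | h
    · exact absurd (AddMonoid.addOrderOf_eq_one_iff.mp h) h1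
    · exact h
  have htop : AddSubgroup.zmultiples (1 : Q) = ⊤ := by
    apply AddSubgroup.eq_top_of_card_eq
    rw [Nat.card_zmultiples, hord, hcard]
  have hx : (Ideal.Quotient.mk v.asIdeal x) ∈ AddSubgroup.zmultiples (1 : Q) := by
    rw [htop]; trivial
  obtain ⟨r, hr⟩ := AddSubgroup.mem_zmultiples_iff.mp hx
  refine ⟨r, ?_⟩
  rw [← Ideal.Quotient.eq_zero_iff_mem]
  have : ((r : ℤ) : Q) = Ideal.Quotient.mk v.asIdeal x := by
    rw [← hr, zsmul_eq_mul, mul_one]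
  simp only [map_sub, map_intCast]
  rw [this, sub_self]

/-- `p > 3` is unramified: `v.asIdeal ^ 2` does not divide `(p)`. -/
lemma not_ramified (p : ℕ) (hp : p.Prime) (hp3 : 3 < p) (v : HeightOneSpectrum OK3)
    (hpv : (p : OK3) ∈ v.asIdeal) : ¬ (v.asIdeal ^ 2 ∣ Ideal.span {(p : OK3)}) := by
  intro hram
  -- absNorm of (p) is p ^ 2
  have hnormp : Ideal.absNorm (Ideal.span {(p : OK3)}) = p ^ 2 := by
    rw [Ideal.absNorm_span_singleton]
    have : (p : OK3) = algebraMap ℤ OK3 (p : ℤ) := by push_cast; rfl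
    rw [this, Algebra.norm_algebraMap_of_basis bZ]
    simp [Int.natAbs_pow]
  -- absNorm of v.asIdeal is p
  have hq : Ideal.absNorm v.asIdeal = p := by
    have hdvd : (Ideal.absNorm v.asIdeal) ^ 2 ∣ p ^ 2 := by
      have := map_dvd Ideal.absNorm hram
      rwa [map_pow, hnormp] at this
    have hdvd' : Ideal.absNorm v.asIdeal ∣ p := (Nat.pow_dvd_pow_iff (by norm_num)).mp hdvd
    rcases hp.eq_one_or_self_of_dvd _ hdvd' with h | h
    · exact absurd (Ideal.absNorm_eq_one_iff.mp h) v.isPrime.ne_top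
    · exact h
  -- v.asIdeal ^ 2 = (p)
  have hsq : v.asIdeal ^ 2 = Ideal.span {(p : OK3)} := by
    obtain ⟨J, hJ⟩ := hram
    have hJ1 : Ideal.absNorm J = 1 := by
      have := congrArg Ideal.absNorm hJ
      rw [hnormp, map_mul, map_pow, hq] at this
      have hp2 : 0 < p ^ 2 := Nat.pow_pos hp.pos
      have h2 : p ^ 2 * Ideal.absNorm J = p ^ 2 * 1 := by omega
      exact Nat.eq_of_mul_eq_mul_left hp2 h2
    rw [hJ, Ideal.absNorm_eq_one_iff.mp hJ1, Ideal.mul_top]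
  have hcard : Nat.card (OK3 ⧸ v.asIdeal) = p := by
    rw [← hq, Ideal.absNorm_apply, Submodule.cardQuot_apply]
  obtain ⟨r, hr⟩ := exists_int_congr v hp hcard z3
  have hmem : ((r ^ 2 + r + 1 : ℤ) : OK3) ∈ v.asIdeal := by
    have hfac : ((r ^ 2 + r + 1 : ℤ) : OK3) = -((z3 - r) * (z3 + r + 1)) := by
      push_cast
      linear_combination z3_sq
    rw [hfac]
    exact neg_mem (Ideal.mul_mem_right _ _ hr)
  have hpdvd : (p : ℤ) ∣ r ^ 2 + r + 1 := int_dvd_of_mem v hp hpv hmem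
  have htsq : (z3 - (r : OK3)) * (z3 - r) ∈ Ideal.span {(p : OK3)} := by
    rw [← hsq, pow_two]
    exact Ideal.mul_mem_mul hr hr
  have hint : ((r ^ 2 + r + 1 : ℤ) : OK3) ∈ Ideal.span {(p : OK3)} := by
    obtain ⟨c, hc⟩ := hpdvd
    rw [Ideal.mem_span_singleton]
    exact ⟨(c : OK3), by rw [hc]; push_cast; ring⟩
  have hmul : ((2 * r + 1 : ℤ) : OK3) * (z3 - r) ∈ Ideal.span {(p : OK3)} := by
    have heq : ((2 * r + 1 : ℤ) : OK3) * (z3 - r)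
        = -((r ^ 2 + r + 1 : ℤ) : OK3) - (z3 - (r : OK3)) * (z3 - r) := by
      push_cast
      linear_combination z3_sq
    rw [heq]
    exact sub_mem (neg_mem hint) htsq
  have hco : ((2 * r + 1 : ℤ) : OK3) * (z3 - (r : OK3))
      = ((-(2 * r + 1) * r : ℤ) : OK3) + ((2 * r + 1 : ℤ) : OK3) * z3 := by
    push_cast
    ring
  rw [Ideal.mem_span_singleton, hco] at hmul
  have hmul' : (((p : ℤ)) : OK3) ∣ ((-(2 * r + 1) * r : ℤ) : OK3) + ((2 * r + 1 : ℤ) : OK3) * z3 := by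
    exact_mod_cast hmul
  have h21 : (p : ℤ) ∣ 2 * r + 1 := ((int_dvd_coords _ _ _).mp hmul').2
  have h3 : (p : ℤ) ∣ 3 := by
    have hd : (p : ℤ) ∣ (2 * r + 1) * (2 * r + 1) - 4 * (r ^ 2 + r + 1) :=
      dvd_sub (h21.mul_right _) (hpdvd.mul_left _)
    have : (2 * r + 1) * (2 * r + 1) - 4 * (r ^ 2 + r + 1) = -3 := by ring
    rw [this] at hd
    exact (dvd_neg.mp hd)
  have hple : p ≤ 3 := Nat.le_of_dvd (by norm_num) (by exact_mod_cast h3)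
  omega

open Multiplicative in
lemma zm0_exists {x : ℤₘ₀} (hx : x ≠ 0) : ∃ j : ℤ, x = (ofAdd j : Multiplicative ℤ) := by
  exact ⟨WithZero.log x, (WithZero.exp_log hx).symm⟩

open Multiplicative in
lemma intval_p (p : ℕ) (hp : p.Prime) (hp3 : 3 < p) (v : HeightOneSpectrum OK3)
    (hpv : (p : OK3) ∈ v.asIdeal) :
    v.intValuation ((p : ℤ) : OK3) = (ofAdd (-1 : ℤ) : Multiplicative ℤ) := by
  have hne : ((p : ℤ) : OK3) ≠ 0 := by
    intro h
    have : ((p : ℤ) : OK3) = ((0 : ℤ) : OK3) := by exact_mod_cast h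
    have := Int.cast_injective (α := OK3) this
    simp at this
    omega
  have hle : v.intValuation ((p : ℤ) : OK3) ≤ ofAdd (-(1 : ℕ) : ℤ) := by
    rw [← WithZero.exp_eq_coe_ofAdd,
      IsDedekindDomain.HeightOneSpectrum.intValuation_le_pow_iff_dvd, pow_one,
      Ideal.dvd_span_singleton]
    exact_mod_cast hpv
  have hnle : ¬ v.intValuation ((p : ℤ) : OK3) ≤ ofAdd (-(2 : ℕ) : ℤ) := by
    rw [← WithZero.exp_eq_coe_ofAdd,
      IsDedekindDomain.HeightOneSpectrum.intValuation_le_pow_iff_dvd]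
    intro hdvd
    exact not_ramified p hp hp3 v hpv (by exact_mod_cast hdvd)
  obtain ⟨j, hj⟩ := zm0_exists (v.intValuation_ne_zero _ hne)
  rw [hj] at hle hnle ⊢
  rw [WithZero.coe_le_coe, Multiplicative.ofAdd_le] at hle hnle
  push_cast at hle hnle
  have : j = -1 := le_antisymm hle (by omega)
  rw [this]

open Multiplicative in
lemma valued_intCast (v : HeightOneSpectrum OK3) (k : ℤ) :
    Valued.v ((k : ℤ) : v.adicCompletion K3) = v.intValuation ((k : ℤ) : OK3) := by
  have h1 : ((k : ℤ) : v.adicCompletion K3) = (((k : ℤ) : K3) : v.adicCompletion K3) := by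
    rw [← map_intCast (algebraMap K3 (v.adicCompletion K3)) k]
    rfl
  rw [h1]
  letI : Valued K3 ℤₘ₀ := v.adicValued
  have h2 : Valued.v (((k : K3)) : v.adicCompletion K3) = v.valuation K3 (k : K3) :=
    IsDedekindDomain.HeightOneSpectrum.adicCompletion.valued_coe (K := K3) (v := v) (k : K3)
  rw [h2]
  have h3 : ((k : ℤ) : K3) = algebraMap OK3 K3 ((k : ℤ) : OK3) := by
    rw [map_intCast]
  rw [h3, IsDedekindDomain.HeightOneSpectrum.valuation_of_algebraMap]

set_option maxHeartbeats 2000000 in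
lemma zmod8_lemma : ∀ m x0 x1 y0 y1 : ZMod 8, (m = 3 ∨ m = 7) →
    m*(y0^2-y1^2) - (x0^2-x1^2) = 0 → m*(2*y0*y1-y1^2) - (2*x0*x1-x1^2) = 0 →
    4*y0 = 0 ∧ 4*y1 = 0 := by decide

/-- Lemma 1.2(1): if `n` is a nonzero integer with `n ≡ 3 (mod 4)` and `p > 3` is a prime
with `ord_p(n)` odd, then `n` is not a square in the completion `K_𝔭` of `K = ℚ(ζ₃)` at
any prime ideal `𝔭` of `O_K` lying over `p` or over `2`. -/
theorem not_square_in_completion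
    (n : ℤ) (hn : n ≠ 0) (hn4 : n % 4 = 3)
    (p : ℕ) (hp : p.Prime) (hp3 : 3 < p) (hord : Odd (padicValInt p n))
    (v : HeightOneSpectrum OK3)
    (hv : (p : OK3) ∈ v.asIdeal ∨ (2 : OK3) ∈ v.asIdeal) :
    ¬ ∃ y : v.adicCompletion K3, y ^ 2 = (n : v.adicCompletion K3) := by
  rintro ⟨y, hy⟩
  haveI : Fact p.Prime := ⟨hp⟩
  rcases hv with hpv | h2v
  · -- case 1 : v lies over p
    set k := padicValInt p n with hk
    obtain ⟨m, hm⟩ := padicValInt_dvd (p := p) n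
    have hpm : ¬ (p : ℤ) ∣ m := by
      intro hdvd
      have : ((p : ℤ)) ^ (k + 1) ∣ n := by
        obtain ⟨c, hc⟩ := hdvd
        exact ⟨c, by rw [hm, hc]; ring⟩
      rcases (padicValInt_dvd_iff (k + 1) n).mp this with h | h
      · exact hn h
      · omega
    -- the valuation of n
    have hvm : v.intValuation ((m : ℤ) : OK3) = 1 := by
      rw [IsDedekindDomain.HeightOneSpectrum.intValuation_apply]
      rcases lt_or_eq_of_le (v.intValuation_le_one ((m : ℤ) : OK3)) with hlt | heq
      · exfalso
        rw [IsDedekindDomain.HeightOneSpectrum.intValuation_lt_one_iff_dvd,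
          Ideal.dvd_span_singleton] at hlt
        exact hpm (int_dvd_of_mem v hp hpv hlt)
      · exact heq
    have hvn : Valued.v ((n : ℤ) : v.adicCompletion K3)
        = ((ofAdd (-(k : ℤ)) : Multiplicative ℤ) : ℤₘ₀) := by
      rw [valued_intCast]
      have : ((n : ℤ) : OK3) = ((p : ℤ) : OK3) ^ k * ((m : ℤ) : OK3) := by
        rw [hm]; push_cast; ring
      rw [this, map_mul, map_pow, hvm, mul_one, intval_p p hp hp3 v hpv]
      rw [← WithZero.coe_pow, ← ofAdd_nsmul]
      norm_num
    have hyv : (Valued.v y) ^ 2 = ((ofAdd (-(k : ℤ)) : Multiplicative ℤ) : ℤₘ₀) := by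
      rw [← hvn, ← map_pow, hy]
    have hyne : Valued.v y ≠ 0 := by
      intro h0
      rw [h0] at hyv
      simp at hyv
    obtain ⟨j, hj⟩ := zm0_exists hyne
    rw [hj, ← WithZero.coe_pow, WithZero.coe_inj, ← ofAdd_nsmul] at hyv
    have h2j : (2 : ℕ) • j = -(k : ℤ) := Multiplicative.ofAdd.injective hyv
    obtain ⟨l, hl⟩ := hord
    rw [nsmul_eq_mul] at h2j
    omega
  · -- case 2 : v lies over 2
    letI : Valued K3 ℤₘ₀ := v.adicValued
    have h2ne : (2 : OK3) ≠ 0 := prime_two.ne_zero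
    have hP2 : v.asIdeal = Ideal.span {(2 : OK3)} := by
      have hprmI : (Ideal.span {(2 : OK3)}).IsPrime :=
        (Ideal.span_singleton_prime h2ne).mpr prime_two
      have hnbot : Ideal.span {(2 : OK3)} ≠ ⊥ := by
        rw [Ne, Ideal.span_singleton_eq_bot]; exact h2ne
      have hmax : (Ideal.span {(2 : OK3)}).IsMaximal :=
        Ring.DimensionLEOne.maximalOfPrime hnbot hprmI
      exact ((hmax.eq_of_le v.isPrime.ne_top ((Ideal.span_singleton_le_iff_mem _).mpr h2v))).symm
    have hiv : ∀ (N : ℕ) (x : OK3),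
        v.intValuation x ≤ ((ofAdd (-(N : ℤ)) : Multiplicative ℤ) : ℤₘ₀) ↔ (2 : OK3) ^ N ∣ x := by
      intro N x
      rw [← WithZero.exp_eq_coe_ofAdd,
        IsDedekindDomain.HeightOneSpectrum.intValuation_le_pow_iff_dvd, hP2,
        Ideal.span_singleton_pow, Ideal.dvd_iff_le, Ideal.span_singleton_le_iff_mem,
        Ideal.mem_span_singleton]
    have hodd : ¬ (2 : ℤ) ∣ n := by omega
    have hvn1 : v.intValuation ((n : ℤ) : OK3) = 1 := by
      rw [IsDedekindDomain.HeightOneSpectrum.intValuation_apply]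
      rcases lt_or_eq_of_le (v.intValuation_le_one ((n : ℤ) : OK3)) with hlt | heq
      · exfalso
        rw [IsDedekindDomain.HeightOneSpectrum.intValuation_lt_one_iff_dvd,
          Ideal.dvd_span_singleton] at hlt
        exact hodd (int_dvd_of_mem v Nat.prime_two h2v hlt)
      · exact heq
    have hvy : Valued.v y = 1 := by
      have hyv : (Valued.v y) ^ 2 = 1 := by
        rw [← map_pow, hy, valued_intCast, hvn1]
      have hyne : Valued.v y ≠ 0 := by
        intro h0; rw [h0] at hyv; simp at hyv
      obtain ⟨j, hj⟩ := zm0_exists hyne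
      rw [hj, ← WithZero.coe_pow, ← WithZero.coe_one, WithZero.coe_inj] at hyv
      rw [← ofAdd_nsmul, ← ofAdd_zero] at hyv
      have hj0 := Multiplicative.ofAdd.injective hyv
      rw [nsmul_eq_mul] at hj0
      have : j = 0 := by omega
      rw [hj, this, ofAdd_zero, WithZero.coe_one]
    -- density: approximate y by an element of K3
    have hg : ((ofAdd (-3 : ℤ) : Multiplicative ℤ) : ℤₘ₀) ≠ 0 := WithZero.coe_ne_zero
    have hmem : {w : v.adicCompletion K3 |
        Valued.v (w - y) < ((Units.mk0 _ hg : ℤₘ₀ˣ) : ℤₘ₀)} ∈ nhds y := by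
      obtain ⟨c, hc⟩ := IsDedekindDomain.HeightOneSpectrum.valuedAdicCompletion_surjective
        (K := K3) (v := v) ((ofAdd (-3 : ℤ) : Multiplicative ℤ) : ℤₘ₀)
      have hc0 : (Valued.v : Valuation (v.adicCompletion K3) ℤₘ₀).restrict c ≠ 0 := by
        rw [Ne, Valuation.restrict_eq_zero_iff, hc]; exact hg
      refine Valued.mem_nhds.mpr ⟨Units.mk0 _ hc0, fun w hw => ?_⟩
      have hw' := (Valuation.restrict_lt_iff (v := Valued.v) (x := w - y) (y := c)).mp hw
      show Valued.v (w - y) < _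
      rw [Units.val_mk0, ← hc]; exact hw'
    have hdense : DenseRange ((↑) : K3 → v.adicCompletion K3) :=
      v.denseRange_algebraMap (K := K3)
    obtain ⟨w, hwS, z, rfl⟩ := mem_closure_iff_nhds.mp (hdense y) _ hmem
    have hzy : Valued.v ((z : v.adicCompletion K3) - y)
        < ((ofAdd (-3 : ℤ) : Multiplicative ℤ) : ℤₘ₀) := hwS
    have h31 : ((ofAdd (-3 : ℤ) : Multiplicative ℤ) : ℤₘ₀) ≤ 1 := by
      rw [← WithZero.coe_one, WithZero.coe_le_coe, ← ofAdd_zero]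
      exact Multiplicative.ofAdd_le.mpr (by norm_num)
    have hvz1 : Valued.v ((z : v.adicCompletion K3)) ≤ 1 := by
      have h1 := (Valued.v).map_add ((z : v.adicCompletion K3) - y) y
      rw [sub_add_cancel] at h1
      exact le_trans h1 (max_le (le_trans hzy.le h31) hvy.le)
    have hnz : Valued.v ((((n : ℤ) : K3) - z ^ 2 : K3) : v.adicCompletion K3)
        < ((ofAdd (-3 : ℤ) : Multiplicative ℤ) : ℤₘ₀) := by
      have hc : ((((n : ℤ) : K3) - z ^ 2 : K3) : v.adicCompletion K3)
          = (y - (z : v.adicCompletion K3)) * (y + (z : v.adicCompletion K3)) := by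
        have hcast : ((((n : ℤ) : K3) - z ^ 2 : K3) : v.adicCompletion K3)
            = ((n : ℤ) : v.adicCompletion K3) - ((z : v.adicCompletion K3)) ^ 2 := by
          rw [show ((((n : ℤ) : K3) - z ^ 2 : K3) : v.adicCompletion K3)
            = (algebraMap K3 (v.adicCompletion K3))
              (((n : ℤ) : K3) - z ^ 2) from rfl, map_sub, map_pow, map_intCast]
          rfl
        rw [hcast, ← hy]; ring
      rw [hc, map_mul]
      have h3 : Valued.v (y + (z : v.adicCompletion K3)) ≤ 1 :=
        le_trans ((Valued.v).map_add y _) (max_le hvy.le hvz1)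
      calc Valued.v (y - (z : v.adicCompletion K3)) * Valued.v (y + (z : v.adicCompletion K3))
          ≤ Valued.v (y - (z : v.adicCompletion K3)) * 1 := mul_le_mul_right h3 _
        _ = Valued.v (y - (z : v.adicCompletion K3)) := mul_one _
        _ < _ := by rw [Valuation.map_sub_swap]; exact hzy
    have hval : v.valuation K3 (((n : ℤ) : K3) - z ^ 2)
        < ((ofAdd (-3 : ℤ) : Multiplicative ℤ) : ℤₘ₀) := by
      rw [IsDedekindDomain.HeightOneSpectrum.adicCompletion.valued_coe] at hnz
      exact hnz
    have hvalz : v.valuation K3 z ≤ 1 := by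
      rw [IsDedekindDomain.HeightOneSpectrum.adicCompletion.valued_coe] at hvz1
      exact hvz1
    -- write z = a / b
    obtain ⟨⟨a, s⟩, hzs⟩ := IsLocalization.mk'_surjective (nonZeroDivisors OK3) z
    dsimp only at hzs
    have hbne : (s : OK3) ≠ 0 := nonZeroDivisors.coe_ne_zero s
    have hbvne : v.intValuation (s : OK3) ≠ 0 := by
      rw [IsDedekindDomain.HeightOneSpectrum.intValuation_apply]
      exact v.intValuation_ne_zero _ hbne
    have hvble : v.intValuation a ≤ v.intValuation (s : OK3) := by
      have h1 : v.valuation K3 z ≤ 1 := hvalz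
      rw [← hzs, IsDedekindDomain.HeightOneSpectrum.valuation_of_mk'] at h1
      calc v.intValuation a
          = v.intValuation a / v.intValuation (s : OK3) * v.intValuation (s : OK3) :=
            (div_mul_cancel₀ _ hbvne).symm
        _ ≤ 1 * v.intValuation (s : OK3) := mul_le_mul_left h1 _
        _ = v.intValuation (s : OK3) := one_mul _
    obtain ⟨jb, hjb⟩ := zm0_exists hbvne
    have hjb0 : jb ≤ 0 := by
      have h1 : v.intValuation (s : OK3) ≤ 1 := by
        rw [IsDedekindDomain.HeightOneSpectrum.intValuation_apply]
        exact v.intValuation_le_one _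
      rw [hjb, ← WithZero.coe_one, WithZero.coe_le_coe, ← ofAdd_zero,
        Multiplicative.ofAdd_le] at h1
      exact h1
    set t : ℕ := (-jb).toNat with ht
    have hjbt : jb = -(t : ℤ) := by omega
    have h2tb : (2 : OK3) ^ t ∣ (s : OK3) :=
      (hiv t _).mp (by rw [hjb, hjbt])
    obtain ⟨b1, hb1⟩ := h2tb
    have hb1odd : ¬ (2 : OK3) ∣ b1 := by
      rintro ⟨b2, hb2⟩
      have hdvd : (2 : OK3) ^ (t + 1) ∣ (s : OK3) := ⟨b2, by rw [hb1, hb2]; ring⟩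
      have hle2 := (hiv (t + 1) _).mpr hdvd
      rw [hjb, hjbt, WithZero.coe_le_coe, Multiplicative.ofAdd_le] at hle2
      push_cast at hle2
      omega
    have h2ta : (2 : OK3) ^ t ∣ a :=
      (hiv t _).mp (le_trans hvble (by rw [hjb, hjbt]))
    obtain ⟨a1, ha1⟩ := h2ta
    -- the key divisibility
    have hkey : (2 : OK3) ^ (2 * t + 3) ∣ ((n : ℤ) : OK3) * (s : OK3) ^ 2 - a ^ 2 := by
      refine (hiv (2 * t + 3) _).mp ?_
      have hbK : algebraMap OK3 K3 (s : OK3) ≠ 0 := by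
        intro h0
        exact hbne ((map_eq_zero_iff _ (IsFractionRing.injective OK3 K3)).mp h0)
      have hzdiv : algebraMap OK3 K3 (((n : ℤ) : OK3) * (s : OK3) ^ 2 - a ^ 2)
          = (((n : ℤ) : K3) - z ^ 2) * algebraMap OK3 K3 ((s : OK3) ^ 2) := by
        rw [← hzs, IsFractionRing.mk'_eq_div]
        push_cast [map_sub, map_mul, map_pow, map_intCast]
        field_simp
      have hv1 : v.valuation K3 (algebraMap OK3 K3 (((n : ℤ) : OK3) * (s : OK3) ^ 2 - a ^ 2))
          < ((ofAdd (-3 : ℤ) : Multiplicative ℤ) : ℤₘ₀) * (v.intValuation (s : OK3)) ^ 2 := by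
        rw [hzdiv, map_mul, IsDedekindDomain.HeightOneSpectrum.valuation_of_algebraMap, map_pow]
        have hb2ne : (v.intValuation (s : OK3)) ^ 2 ≠ 0 := pow_ne_zero _ hbvne
        calc v.valuation K3 (((n : ℤ) : K3) - z ^ 2) * (v.intValuation (s : OK3)) ^ 2
            = (v.intValuation (s : OK3)) ^ 2 * v.valuation K3 (((n : ℤ) : K3) - z ^ 2) :=
              mul_comm _ _
          _ < (v.intValuation (s : OK3)) ^ 2 * ((ofAdd (-3 : ℤ) : Multiplicative ℤ) : ℤₘ₀) :=
              mul_lt_mul_of_pos_left hval (zero_lt_iff.mpr hb2ne)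
          _ = _ := mul_comm _ _
      rw [IsDedekindDomain.HeightOneSpectrum.valuation_of_algebraMap] at hv1
      rw [hjb, hjbt] at hv1
      have hcomp : ((ofAdd (-3 : ℤ) : Multiplicative ℤ) : ℤₘ₀)
          * (((ofAdd (-(t : ℤ)) : Multiplicative ℤ) : ℤₘ₀)) ^ 2
          = ((ofAdd (-(((2 * t + 3 : ℕ)) : ℤ)) : Multiplicative ℤ) : ℤₘ₀) := by
        rw [← WithZero.coe_pow, ← WithZero.coe_mul, WithZero.coe_inj, ← ofAdd_nsmul, ← ofAdd_add]
        congr 1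
        push_cast
        ring
      rw [hcomp] at hv1
      exact hv1.le
    have h8 : (2 : OK3) ^ 3 ∣ ((n : ℤ) : OK3) * b1 ^ 2 - a1 ^ 2 := by
      have hc2 : ((n : ℤ) : OK3) * (s : OK3) ^ 2 - a ^ 2
          = (2 : OK3) ^ (2 * t) * (((n : ℤ) : OK3) * b1 ^ 2 - a1 ^ 2) := by
        rw [hb1, ha1]; ring
      rw [hc2, pow_add] at hkey
      exact (mul_dvd_mul_iff_left (pow_ne_zero (2 * t) h2ne)).mp hkey
    obtain ⟨x0, x1, hax⟩ := coords_surj a1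
    obtain ⟨y0, y1, hbx⟩ := coords_surj b1
    have hbodd : ¬ ((2 : ℤ) ∣ y0 ∧ (2 : ℤ) ∣ y1) := by
      intro hh
      apply hb1odd
      have hd : ((2 : ℤ) : OK3) ∣ (y0 : OK3) + (y1 : OK3) * z3 := (int_dvd_coords 2 y0 y1).mpr hh
      rw [← hbx] at hd
      exact_mod_cast hd
    have hform : ((n : ℤ) : OK3) * b1 ^ 2 - a1 ^ 2
        = ((n * (y0 ^ 2 - y1 ^ 2) - (x0 ^ 2 - x1 ^ 2) : ℤ) : OK3)
          + ((n * (2 * y0 * y1 - y1 ^ 2) - (2 * x0 * x1 - x1 ^ 2) : ℤ) : OK3) * z3 := by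
      rw [hax, hbx, sq_formula, sq_formula]
      push_cast
      ring
    have h8' : ((8 : ℤ) : OK3) ∣ ((n * (y0 ^ 2 - y1 ^ 2) - (x0 ^ 2 - x1 ^ 2) : ℤ) : OK3)
        + ((n * (2 * y0 * y1 - y1 ^ 2) - (2 * x0 * x1 - x1 ^ 2) : ℤ) : OK3) * z3 := by
      rw [← hform]
      have : ((8 : ℤ) : OK3) = (2 : OK3) ^ 3 := by push_cast; ring
      rw [this]
      exact h8
    obtain ⟨hA, hB⟩ := (int_dvd_coords 8 _ _).mp h8'
    have hn8 : ((n : ℤ) : ZMod 8) = 3 ∨ ((n : ℤ) : ZMod 8) = 7 := by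
      have h8n : n % 8 = 3 ∨ n % 8 = 7 := by omega
      have hsub : ((n - n % 8 : ℤ) : ZMod 8) = 0 := by
        rw [ZMod.intCast_zmod_eq_zero_iff_dvd]; omega
      rw [Int.cast_sub] at hsub
      have hcast : ((n : ℤ) : ZMod 8) = ((n % 8 : ℤ) : ZMod 8) := by
        linear_combination (hsub : _)
      rcases h8n with h | h
      · left; rw [hcast, h]; norm_num
      · right; rw [hcast, h]; norm_num
    have hA8 : ((n : ℤ) : ZMod 8) * (((y0 : ℤ) : ZMod 8) ^ 2 - ((y1 : ℤ) : ZMod 8) ^ 2)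
        - (((x0 : ℤ) : ZMod 8) ^ 2 - ((x1 : ℤ) : ZMod 8) ^ 2) = 0 := by
      have h0 := (ZMod.intCast_zmod_eq_zero_iff_dvd _ 8).mpr (by exact_mod_cast hA)
      push_cast at h0
      linear_combination h0
    have hB8 : ((n : ℤ) : ZMod 8) * (2 * ((y0 : ℤ) : ZMod 8) * ((y1 : ℤ) : ZMod 8)
          - ((y1 : ℤ) : ZMod 8) ^ 2)
        - (2 * ((x0 : ℤ) : ZMod 8) * ((x1 : ℤ) : ZMod 8) - ((x1 : ℤ) : ZMod 8) ^ 2) = 0 := by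
      have h0 := (ZMod.intCast_zmod_eq_zero_iff_dvd _ 8).mpr (by exact_mod_cast hB)
      push_cast at h0
      linear_combination h0
    obtain ⟨hy0, hy1⟩ := zmod8_lemma _ _ _ _ _ hn8 hA8 hB8
    have hdy0 : (2 : ℤ) ∣ y0 := by
      have h4 : ((4 * y0 : ℤ) : ZMod 8) = 0 := by push_cast; linear_combination hy0
      rw [ZMod.intCast_zmod_eq_zero_iff_dvd] at h4
      omega
    have hdy1 : (2 : ℤ) ∣ y1 := by
      have h4 : ((4 * y1 : ℤ) : ZMod 8) = 0 := by push_cast; linear_combination hy1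
      rw [ZMod.intCast_zmod_eq_zero_iff_dvd] at h4
      omega
    exact hbodd ⟨hdy0, hdy1⟩
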